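/- arXiv:2010.02624 — 8 statements merged into one kernel-verified Lean document; each statement's English description precedes it below -/
import Mathlib

section
/- Let φ1 > 0, η > 0, χ > 0 and T > 0, and define g3 : ℝ → ℝ by g3(t) = √(φ1 η) · (e^{2t√(φ1/η)}(√(φ1 η) − χ) − e^{2T√(φ1/η)}(√(φ1 η) + χ)) / (e^{2t√(φ1/η)}(√(φ1 η) − χ) + e^{2T√(φ1/η)}(√(φ1 η) + χ)). Then g3(T) = −χ, and for every t ∈ [0, T] the function g3 is differentiable at t with derivative g3'(t) = φ1 − g3(t)²/η; that is, g3 solves the Riccati equation g3' − φ1 + g3²/η = 0 with terminal condition g3(T) = −χ. -/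
/-!
Write `s = √(φ1 η)` and `k = √(φ1/η)`, so that `s k = φ1` and `k / s = 1 / η`. With
`E(t) = e^{2kt} a` one has `E' = 2kE`, and the Möbius profile `y = s (E - b) / (E + b)` has
`y' = 4 s k b E / (E + b)² = (k / s) (s² - y²)`, which is the Riccati equation
`y' = φ1 - y² / η`. For `g3`, `a = s - χ` and `b = e^{2kT} (s + χ)`, so `y(T) = -χ`; the
denominator equals `2 s e^{2kt} + (e^{2kT} - e^{2kt}) (s + χ)`, positive for `t ≤ T`.
-/

open Real

noncomputable def riccatiProfile (s k a b t : ℝ) : ℝ :=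
  s * (exp (2 * t * k) * a - b) / (exp (2 * t * k) * a + b)

theorem hasDerivAt_riccatiProfile {s k a b t : ℝ} (hs : s ≠ 0)
    (hden : exp (2 * t * k) * a + b ≠ 0) :
    HasDerivAt (riccatiProfile s k a b) (k * (s ^ 2 - riccatiProfile s k a b t ^ 2) / s) t := by
  have hE : HasDerivAt (fun u => exp (2 * u * k)) (exp (2 * t * k) * (2 * k)) t := by
    simpa using ((hasDerivAt_id t).const_mul 2).mul_const k |>.exp
  have hnum := ((hE.mul_const a).sub_const b).const_mul s
  have hquot := hnum.div ((hE.mul_const a).add_const b) hden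
  refine hquot.congr_deriv ?_
  unfold riccatiProfile
  field_simp
  ring

theorem riccati_denominator_pos {s χ k t T : ℝ} (hs : 0 < s) (hχ : 0 ≤ s + χ) (hk : 0 ≤ k)
    (htT : t ≤ T) : 0 < exp (2 * t * k) * (s - χ) + exp (2 * T * k) * (s + χ) := by
  have hmono : exp (2 * t * k) ≤ exp (2 * T * k) := exp_le_exp.mpr (by nlinarith)
  calc 0 < 2 * s * exp (2 * t * k) + (exp (2 * T * k) - exp (2 * t * k)) * (s + χ) := by
        have := exp_pos (2 * t * k)
        have := mul_nonneg (sub_nonneg.mpr hmono) hχ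
        positivity
    _ = exp (2 * t * k) * (s - χ) + exp (2 * T * k) * (s + χ) := by ring

theorem sqrt_mul_mul_sqrt_div {x y : ℝ} (hx : 0 ≤ x) (hy : 0 < y) :
    √(x * y) * √(x / y) = x := by
  rw [← sqrt_mul (by positivity), show x * y * (x / y) = x ^ 2 by field_simp]
  exact sqrt_sq hx

theorem g3_solves_riccati_general (φ1 η χ T : ℝ) (hφ1 : 0 < φ1) (hη : 0 < η) (hχ : 0 < χ)
    (g3 : ℝ → ℝ)
    (hg3 : ∀ t, g3 t =
      Real.sqrt (φ1 * η) *
        (Real.exp (2 * t * Real.sqrt (φ1 / η)) * (Real.sqrt (φ1 * η) - χ)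
          - Real.exp (2 * T * Real.sqrt (φ1 / η)) * (Real.sqrt (φ1 * η) + χ)) /
        (Real.exp (2 * t * Real.sqrt (φ1 / η)) * (Real.sqrt (φ1 * η) - χ)
          + Real.exp (2 * T * Real.sqrt (φ1 / η)) * (Real.sqrt (φ1 * η) + χ))) :
    g3 T = -χ ∧ ∀ t ∈ Set.Icc (0 : ℝ) T, HasDerivAt g3 (φ1 - (g3 t) ^ 2 / η) t := by
  set s := √(φ1 * η)
  set k := √(φ1 / η)
  have hs : 0 < s := sqrt_pos.mpr (by positivity)
  have hsk : s * k = φ1 := sqrt_mul_mul_sqrt_div hφ1.le hη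
  have hss : s ^ 2 = φ1 * η := sq_sqrt (by positivity)
  have hηk : η * k = s := mul_left_cancel₀ hs.ne' (by linear_combination η * hsk - hss)
  have hg3_eq : g3 = riccatiProfile s k (s - χ) (exp (2 * T * k) * (s + χ)) := funext hg3
  have hden : ∀ t ≤ T, 0 < exp (2 * t * k) * (s - χ) + exp (2 * T * k) * (s + χ) :=
    fun t ht => riccati_denominator_pos hs (by linarith) (sqrt_nonneg _) ht
  constructor
  · rw [hg3 T, div_eq_iff (hden T le_rfl).ne']
    ring
  · rintro t ⟨-, htT⟩
    convert hasDerivAt_riccatiProfile hs.ne' (hden t htT).ne' using 1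
    rw [← congrFun hg3_eq t]
    field_simp
    linear_combination (g3 t ^ 2 - s ^ 2) * hηk - s * hss

/-- The closed-form `g3` solves the Riccati equation `g3' − φ1 + g3²/η = 0`
with terminal condition `g3(T) = −χ`. -/
theorem g3_solves_riccati (φ1 η χ T : ℝ) (hφ1 : 0 < φ1) (hη : 0 < η) (hχ : 0 < χ)
    (hT : 0 < T) (g3 : ℝ → ℝ)
    (hg3 : ∀ t, g3 t =
      Real.sqrt (φ1 * η) *
        (Real.exp (2 * t * Real.sqrt (φ1 / η)) * (Real.sqrt (φ1 * η) - χ)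
          - Real.exp (2 * T * Real.sqrt (φ1 / η)) * (Real.sqrt (φ1 * η) + χ)) /
        (Real.exp (2 * t * Real.sqrt (φ1 / η)) * (Real.sqrt (φ1 * η) - χ)
          + Real.exp (2 * T * Real.sqrt (φ1 / η)) * (Real.sqrt (φ1 * η) + χ))) :
    g3 T = -χ ∧ ∀ t ∈ Set.Icc (0 : ℝ) T, HasDerivAt g3 (φ1 - (g3 t) ^ 2 / η) t :=
  g3_solves_riccati_general φ1 η χ T hφ1 hη hχ g3 hg3
end

section
/- Let φ1 > 0, η > 0, χ > 0 and T > 0, and define g3 : ℝ → ℝ by g3(t) = √(φ1 η) · (e^{2t√(φ1/η)}(√(φ1 η) − χ) − e^{2T√(φ1/η)}(√(φ1 η) + χ)) / (e^{2t√(φ1/η)}(√(φ1 η) − χ) + e^{2T√(φ1/η)}(√(φ1 η) + χ)). Then g3(t) < 0 for every t ∈ [0, T]; moreover, if √(φ1 η) ≥ χ then g3 is monotone nondecreasing on [0, T]. -/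
open Real

/-!
With `s = √(φ1 η)`, `b = e^{2T√(φ1/η)} (s + χ)` and `x(t) = e^{2t√(φ1/η)} (s - χ)`, one has
`g3 t = s · (x - b) / (x + b)` with `x = x(t)`. For `t ≤ T` the bound `|s - χ| < s + χ` gives
`|x(t)| < b`, so the numerator is negative and the denominator positive. The map
`x ↦ (x - b) / (x + b) = 1 - 2b / (x + b)` is increasing on `(-b, ∞)`, and `x(t)` is
nondecreasing in `t` when `s ≥ χ`.
-/

lemma sub_div_add_neg_of_abs_lt {x b : ℝ} (h : |x| < b) : (x - b) / (x + b) < 0 := by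
  obtain ⟨hlo, hhi⟩ := abs_lt.mp h
  exact div_neg_of_neg_of_pos (by linarith) (by linarith)

lemma monotoneOn_sub_div_add {b : ℝ} (hb : 0 < b) :
    MonotoneOn (fun x : ℝ => (x - b) / (x + b)) (Set.Ioi (-b)) := by
  intro x hx y hy hxy
  have hx' : 0 < x + b := neg_lt_iff_pos_add.mp hx
  have hy' : 0 < y + b := neg_lt_iff_pos_add.mp hy
  rw [div_le_div_iff₀ hx' hy']
  nlinarith

theorem g3_neg_and_monotone_general (φ1 η χ T : ℝ) (hφ1 : 0 < φ1) (hη : 0 < η) (hχ : 0 < χ)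
    (g3 : ℝ → ℝ)
    (hg3 : ∀ t, g3 t =
      Real.sqrt (φ1 * η) *
        (Real.exp (2 * t * Real.sqrt (φ1 / η)) * (Real.sqrt (φ1 * η) - χ)
          - Real.exp (2 * T * Real.sqrt (φ1 / η)) * (Real.sqrt (φ1 * η) + χ)) /
        (Real.exp (2 * t * Real.sqrt (φ1 / η)) * (Real.sqrt (φ1 * η) - χ)
          + Real.exp (2 * T * Real.sqrt (φ1 / η)) * (Real.sqrt (φ1 * η) + χ))) :
    (∀ t ∈ Set.Icc (0 : ℝ) T, g3 t < 0) ∧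
    (χ ≤ Real.sqrt (φ1 * η) → MonotoneOn g3 (Set.Icc (0 : ℝ) T)) := by
  set s := √(φ1 * η)
  set k := √(φ1 / η)
  set b := exp (2 * T * k) * (s + χ)
  set x := fun t => exp (2 * t * k) * (s - χ)
  have hs : 0 < s := sqrt_pos.mpr (mul_pos hφ1 hη)
  have hg3' : ∀ t, g3 t = s * ((x t - b) / (x t + b)) := fun t => by rw [hg3, mul_div_assoc]
  have hexp_mono : Monotone fun t => exp (2 * t * k) := fun t t' htt' =>
    exp_le_exp.mpr (by have := sqrt_nonneg (φ1 / η); nlinarith)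
  have hx_lt : ∀ t ≤ T, |x t| < b := fun t ht =>
    calc |x t| = exp (2 * t * k) * |s - χ| := by rw [abs_mul, abs_of_pos (exp_pos _)]
      _ ≤ exp (2 * T * k) * |s - χ| := mul_le_mul_of_nonneg_right (hexp_mono ht) (abs_nonneg _)
      _ < b := mul_lt_mul_of_pos_left
          (abs_sub_lt_iff.mpr ⟨by linarith, by linarith⟩) (exp_pos _)
  refine ⟨fun t ht => ?_, fun hχs => ?_⟩
  · rw [hg3']
    exact mul_neg_of_pos_of_neg hs (sub_div_add_neg_of_abs_lt (hx_lt t ht.2))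
  · have hb : 0 < b := (abs_nonneg _).trans_lt (hx_lt T le_rfl)
    have hx_mono : MonotoneOn x (Set.Icc 0 T) := fun t _ t' _ htt' =>
      mul_le_mul_of_nonneg_right (hexp_mono htt') (sub_nonneg.mpr hχs)
    have hx_maps : Set.MapsTo x (Set.Icc 0 T) (Set.Ioi (-b)) := fun t ht =>
      (abs_lt.mp (hx_lt t ht.2)).1
    intro t ht t' ht' htt'
    rw [hg3', hg3']
    exact mul_le_mul_of_nonneg_left
      ((monotoneOn_sub_div_add hb).comp hx_mono hx_maps ht ht' htt') hs.le

/-- The closed-form Riccati solution `g3` is negative on `[0, T]`, and is monotone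
nondecreasing on `[0, T]` whenever `√(φ1 η) ≥ χ`. -/
theorem g3_neg_and_monotone (φ1 η χ T : ℝ) (hφ1 : 0 < φ1) (hη : 0 < η) (hχ : 0 < χ)
    (hT : 0 < T) (g3 : ℝ → ℝ)
    (hg3 : ∀ t, g3 t =
      Real.sqrt (φ1 * η) *
        (Real.exp (2 * t * Real.sqrt (φ1 / η)) * (Real.sqrt (φ1 * η) - χ)
          - Real.exp (2 * T * Real.sqrt (φ1 / η)) * (Real.sqrt (φ1 * η) + χ)) /
        (Real.exp (2 * t * Real.sqrt (φ1 / η)) * (Real.sqrt (φ1 * η) - χ)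
          + Real.exp (2 * T * Real.sqrt (φ1 / η)) * (Real.sqrt (φ1 * η) + χ))) :
    (∀ t ∈ Set.Icc (0 : ℝ) T, g3 t < 0) ∧
    (χ ≤ Real.sqrt (φ1 * η) → MonotoneOn g3 (Set.Icc (0 : ℝ) T)) :=
  g3_neg_and_monotone_general φ1 η χ T hφ1 hη hχ g3 hg3
end

section
/- Let φ1 > 0, η > 0, χ > 0, μ1 > 0 and T > 0, define g3 : ℝ → ℝ by g3(t) = √(φ1 η) · (e^{2t√(φ1/η)}(√(φ1 η) − χ) − e^{2T√(φ1/η)}(√(φ1 η) + χ)) / (e^{2t√(φ1/η)}(√(φ1 η) − χ) + e^{2T√(φ1/η)}(√(φ1 η) + χ)), and define ĝ(r; t) = exp((1/η)·∫_t^r g3(s) ds + μ1·(r − t)). Then for all 0 ≤ t ≤ r ≤ T one has 0 < ĝ(r; t) ≤ e^{μ1 (r − t)}. -/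
/-!
Since `√(φ1 η) ≥ 0`, `χ > 0` and `t ↦ e^{2t√(φ1/η)}` is increasing, the numerator of `g3 s` is
nonpositive and its denominator nonnegative for `s ≤ T`. Hence `∫_t^r g3 ≤ 0`, so the exponent of
`ĝ(r; t)` is at most `μ1 (r − t)`.
-/

open Real

lemma riccati_ratio_nonpos {k χ x y : ℝ} (hk : 0 ≤ k) (hχ : 0 ≤ χ) (hx : 0 ≤ x) (hxy : x ≤ y) :
    k * (x * (k - χ) - y * (k + χ)) / (x * (k - χ) + y * (k + χ)) ≤ 0 := by
  have hy : 0 ≤ y := hx.trans hxy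
  apply div_nonpos_of_nonpos_of_nonneg
  · refine mul_nonpos_of_nonneg_of_nonpos hk ?_
    nlinarith [mul_nonneg hk (sub_nonneg.2 hxy), mul_nonneg hχ (add_nonneg hx hy)]
  · nlinarith [mul_nonneg hk (add_nonneg hx hy), mul_nonneg hχ (sub_nonneg.2 hxy)]

lemma intervalIntegral_nonpos {μ : MeasureTheory.Measure ℝ} {f : ℝ → ℝ} {a b : ℝ} (hab : a ≤ b)
    (hf : ∀ u ∈ Set.Icc a b, f u ≤ 0) : ∫ u in a..b, f u ∂μ ≤ 0 := by
  have h := intervalIntegral.integral_nonneg (μ := μ) hab fun u hu => neg_nonneg.2 (hf u hu)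
  rwa [intervalIntegral.integral_neg, neg_nonneg] at h

theorem ghat_bounds_general (φ1 η χ μ1 T : ℝ) (hη : 0 < η) (hχ : 0 < χ)
    (g3 : ℝ → ℝ) (ghat : ℝ → ℝ → ℝ)
    (hg3 : ∀ t, g3 t =
      Real.sqrt (φ1 * η) *
        (Real.exp (2 * t * Real.sqrt (φ1 / η)) * (Real.sqrt (φ1 * η) - χ)
          - Real.exp (2 * T * Real.sqrt (φ1 / η)) * (Real.sqrt (φ1 * η) + χ)) /
        (Real.exp (2 * t * Real.sqrt (φ1 / η)) * (Real.sqrt (φ1 * η) - χ)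
          + Real.exp (2 * T * Real.sqrt (φ1 / η)) * (Real.sqrt (φ1 * η) + χ)))
    (hghat : ∀ t r, ghat r t =
      Real.exp ((1 / η) * (∫ s in t..r, g3 s) + μ1 * (r - t))) :
    ∀ t r : ℝ, 0 ≤ t → t ≤ r → r ≤ T →
      0 < ghat r t ∧ ghat r t ≤ Real.exp (μ1 * (r - t)) := by
  intro t r _ htr hrT
  have hg3_nonpos : ∀ s ≤ T, g3 s ≤ 0 := fun s hs => by
    rw [hg3 s]
    refine riccati_ratio_nonpos (sqrt_nonneg _) hχ.le (exp_nonneg _) (exp_le_exp.2 (by gcongr))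
  have hint : ∫ s in t..r, g3 s ≤ 0 :=
    intervalIntegral_nonpos htr fun u hu => hg3_nonpos u (hu.2.trans hrT)
  rw [hghat t r]
  refine ⟨exp_pos _, exp_le_exp.2 ?_⟩
  have : (1 / η) * ∫ s in t..r, g3 s ≤ 0 := mul_nonpos_of_nonneg_of_nonpos (by positivity) hint
  linarith

/-- The discount factor `ĝ(r; t) = exp((1/η)·∫_t^r g3 + μ1·(r − t))` satisfies
`0 < ĝ(r; t) ≤ e^{μ1 (r − t)}` for `0 ≤ t ≤ r ≤ T`. -/
theorem ghat_bounds (φ1 η χ μ1 T : ℝ) (hφ1 : 0 < φ1) (hη : 0 < η) (hχ : 0 < χ)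
    (hμ1 : 0 < μ1) (hT : 0 < T) (g3 : ℝ → ℝ) (ghat : ℝ → ℝ → ℝ)
    (hg3 : ∀ t, g3 t =
      Real.sqrt (φ1 * η) *
        (Real.exp (2 * t * Real.sqrt (φ1 / η)) * (Real.sqrt (φ1 * η) - χ)
          - Real.exp (2 * T * Real.sqrt (φ1 / η)) * (Real.sqrt (φ1 * η) + χ)) /
        (Real.exp (2 * t * Real.sqrt (φ1 / η)) * (Real.sqrt (φ1 * η) - χ)
          + Real.exp (2 * T * Real.sqrt (φ1 / η)) * (Real.sqrt (φ1 * η) + χ)))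
    (hghat : ∀ t r, ghat r t =
      Real.exp ((1 / η) * (∫ s in t..r, g3 s) + μ1 * (r - t))) :
    ∀ t r : ℝ, 0 ≤ t → t ≤ r → r ≤ T →
      0 < ghat r t ∧ ghat r t ≤ Real.exp (μ1 * (r - t)) :=
  ghat_bounds_general φ1 η χ μ1 T hη hχ g3 ghat hg3 hghat
end

section
/- Fix real parameters k > 0, σ1 > 0, σ2 > 0, μ1 > 0, ρ ∈ [−1, 1], φ2 ≥ 0, φ3 ≥ 0. Define μ̄(s) = e^{−k s}, σ̄(s)² = (σ2²/(2k))(1 − e^{−2 k s}), and f(r, ε; t) = exp(μ̄(r−t)·ε + σ̄(r−t)²/2 + (ρ/k)·σ1·σ2·(1 − μ̄(r−t))) · (k·μ̄(r−t)·ε + k·σ̄(r−t)² − σ2²/2 − ρ·σ1·σ2·μ̄(r−t) − μ1 + φ2) + φ3. Then for all 0 ≤ t ≤ r and all ε ∈ ℝ: f(r, ε; t) ≥ φ3 − k · exp(−σ̄(r−t)²/2 + σ2²/(2k) − 1 + μ1/k + (ρ/k)·σ1·σ2 − φ2/k). -/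
/-!
Writing `b` for the second factor of `f - φ3`, the exponent of the first factor is
`b / k + c`, where `c - 1` is the exponent on the right-hand side. Hence
`f - φ3 = k e^c · y e^y` with `y = b / k`, and the bound is `y e^y ≥ -e^{-1}`.
-/

open Real

theorem neg_exp_neg_one_le_mul_exp (y : ℝ) : -exp (-1) ≤ y * exp y := by
  have h := mul_exp_neg_le_exp_neg_one (-y)
  rw [neg_neg] at h
  linarith

theorem neg_mul_exp_sub_one_le_exp_div_add_mul {k : ℝ} (hk : 0 < k) (c y : ℝ) :
    -(k * exp (c - 1)) ≤ exp (y / k + c) * y := by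
  have hfactor : exp (y / k + c) * y = k * exp c * (y / k * exp (y / k)) := by
    rw [exp_add]; field_simp
  have hshift : exp (c - 1) = exp c * exp (-1) := by
    rw [← exp_add, sub_eq_add_neg]
  rw [hfactor, hshift, ← mul_assoc, ← mul_neg]
  exact mul_le_mul_of_nonneg_left (neg_exp_neg_one_le_mul_exp (y / k))
    (mul_pos hk (exp_pos c)).le

theorem f_lower_bound_general (k σ1 σ2 μ1 ρ φ2 φ3 : ℝ)
    (hk : 0 < k)
    (mubar sigbarSq : ℝ → ℝ) (f : ℝ → ℝ → ℝ → ℝ)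
    (hf : ∀ r ε t, f r ε t =
      Real.exp (mubar (r - t) * ε + sigbarSq (r - t) / 2
          + (ρ / k) * σ1 * σ2 * (1 - mubar (r - t))) *
        (k * mubar (r - t) * ε + k * sigbarSq (r - t) - σ2 ^ 2 / 2
          - ρ * σ1 * σ2 * mubar (r - t) - μ1 + φ2) + φ3) :
    ∀ t r : ℝ, 0 ≤ t → t ≤ r → ∀ ε : ℝ,
      f r ε t ≥ φ3 - k * Real.exp (-sigbarSq (r - t) / 2 + σ2 ^ 2 / (2 * k) - 1
        + μ1 / k + (ρ / k) * σ1 * σ2 - φ2 / k) := by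
  intro t r _ _ ε
  rw [hf]
  set m := mubar (r - t)
  set S := sigbarSq (r - t)
  set c := -S / 2 + σ2 ^ 2 / (2 * k) + μ1 / k + (ρ / k) * σ1 * σ2 - φ2 / k
  set b := k * m * ε + k * S - σ2 ^ 2 / 2 - ρ * σ1 * σ2 * m - μ1 + φ2
  have hexponent : m * ε + S / 2 + (ρ / k) * σ1 * σ2 * (1 - m) = b / k + c := by
    simp only [b, c]; field_simp; ring
  have hrhs : -S / 2 + σ2 ^ 2 / (2 * k) - 1 + μ1 / k + (ρ / k) * σ1 * σ2 - φ2 / k = c - 1 := by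
    simp only [c]; ring
  rw [hexponent, hrhs]
  linarith [neg_mul_exp_sub_one_le_exp_div_add_mul hk c b]

/-- Lower bound for the integrand `f(r, ε; t)` appearing in the representation of
`e^ε(1 − g2(t,ε))`, by the value of `f` at its minimizing `ε`. -/
theorem f_lower_bound (k σ1 σ2 μ1 ρ φ2 φ3 : ℝ)
    (hk : 0 < k) (hσ1 : 0 < σ1) (hσ2 : 0 < σ2) (hμ1 : 0 < μ1)
    (hρ : ρ ∈ Set.Icc (-1 : ℝ) 1) (hφ2 : 0 ≤ φ2) (hφ3 : 0 ≤ φ3)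
    (mubar sigbarSq : ℝ → ℝ) (f : ℝ → ℝ → ℝ → ℝ)
    (hmubar : ∀ s, mubar s = Real.exp (-k * s))
    (hsigbarSq : ∀ s, sigbarSq s = σ2 ^ 2 / (2 * k) * (1 - Real.exp (-2 * k * s)))
    (hf : ∀ r ε t, f r ε t =
      Real.exp (mubar (r - t) * ε + sigbarSq (r - t) / 2
          + (ρ / k) * σ1 * σ2 * (1 - mubar (r - t))) *
        (k * mubar (r - t) * ε + k * sigbarSq (r - t) - σ2 ^ 2 / 2
          - ρ * σ1 * σ2 * mubar (r - t) - μ1 + φ2) + φ3) :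
    ∀ t r : ℝ, 0 ≤ t → t ≤ r → ∀ ε : ℝ,
      f r ε t ≥ φ3 - k * Real.exp (-sigbarSq (r - t) / 2 + σ2 ^ 2 / (2 * k) - 1
        + μ1 / k + (ρ / k) * σ1 * σ2 - φ2 / k) :=
  f_lower_bound_general k σ1 σ2 μ1 ρ φ2 φ3 hk mubar sigbarSq f hf
end

section
/- Fix real parameters k > 0, σ1 > 0, σ2 > 0, μ1 > 0, ρ ∈ [−1, 1], φ2 ≥ 0, φ3 ≥ 0 satisfying φ3·e^{1 + φ2/k} ≥ k·e^{σ2²/(2k) + μ1/k + (ρ/k)·σ1·σ2}. Define μ̄(s) = e^{−k s}, σ̄(s)² = (σ2²/(2k))(1 − e^{−2 k s}), and f(r, ε; t) = exp(μ̄(r−t)·ε + σ̄(r−t)²/2 + (ρ/k)·σ1·σ2·(1 − μ̄(r−t))) · (k·μ̄(r−t)·ε + k·σ̄(r−t)² − σ2²/2 − ρ·σ1·σ2·μ̄(r−t) − μ1 + φ2) + φ3. Then f(r, ε; t) ≥ 0 for all 0 ≤ t ≤ r and all ε ∈ ℝ. -/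
/-!
With `y` the bracket of `f` divided by `k` (affine in `ε`), `f = k e^α · y e^y + φ3` for an
`α` independent of `ε`. Since `y e^y ≥ -e⁻¹`, it suffices that `k e^(α - 1) ≤ φ3`, and this is
condition (51) once the term `-σ̄²/2 ≤ 0` in `α` is dropped.
-/

open Real

lemma neg_exp_sub_one_le_exp_add_mul (α y : ℝ) : -exp (α - 1) ≤ exp (α + y) * y := by
  have h := mul_le_mul_of_nonneg_left (add_one_le_exp (-y - 1)) (exp_pos (α + y)).le
  rw [← exp_add] at h
  ring_nf at h ⊢
  linarith

lemma exp_add_mul_mul_add_nonneg {k α φ : ℝ} (hk : 0 ≤ k) (hφ : k * exp (α - 1) ≤ φ) (y : ℝ) :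
    0 ≤ exp (α + y) * (k * y) + φ := by
  nlinarith [neg_exp_sub_one_le_exp_add_mul α y]

theorem f_nonneg_under_condition_general (k σ1 σ2 μ1 ρ φ2 φ3 : ℝ)
    (hk : 0 < k)
    (hcond : φ3 * Real.exp (1 + φ2 / k) ≥
      k * Real.exp (σ2 ^ 2 / (2 * k) + μ1 / k + (ρ / k) * σ1 * σ2))
    (mubar sigbarSq : ℝ → ℝ) (f : ℝ → ℝ → ℝ → ℝ)
    (hsigbarSq : ∀ s, sigbarSq s = σ2 ^ 2 / (2 * k) * (1 - Real.exp (-2 * k * s)))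
    (hf : ∀ r ε t, f r ε t =
      Real.exp (mubar (r - t) * ε + sigbarSq (r - t) / 2
          + (ρ / k) * σ1 * σ2 * (1 - mubar (r - t))) *
        (k * mubar (r - t) * ε + k * sigbarSq (r - t) - σ2 ^ 2 / 2
          - ρ * σ1 * σ2 * mubar (r - t) - μ1 + φ2) + φ3) :
    ∀ t r : ℝ, 0 ≤ t → t ≤ r → ∀ ε : ℝ, 0 ≤ f r ε t := by
  intro t r _ htr ε
  have hv : 0 ≤ sigbarSq (r - t) := by
    rw [hsigbarSq]
    exact mul_nonneg (by positivity) (sub_nonneg.mpr (exp_le_one_iff.mpr (by nlinarith)))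
  set m := mubar (r - t)
  set v := sigbarSq (r - t)
  set c := (ρ / k) * σ1 * σ2
  set E := σ2 ^ 2 / (2 * k) + μ1 / k + c
  set y := m * ε + v - σ2 ^ 2 / (2 * k) - c * m - μ1 / k + φ2 / k
  set α := E - φ2 / k - v / 2 with hα
  have hf' : f r ε t = exp (α + y) * (k * y) + φ3 := by
    rw [hf]
    congr 2
    · congr 1
      ring
    · simp only [y, c]
      field_simp
      ring
  rw [hf']
  refine exp_add_mul_mul_add_nonneg hk.le ?_ _
  calc k * exp (α - 1) ≤ k * exp (E - (1 + φ2 / k)) := by gcongr k * exp ?_; linarith [hα]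
    _ = k * exp E / exp (1 + φ2 / k) := by rw [exp_sub]; ring
    _ ≤ φ3 := by rw [div_le_iff₀ (exp_pos _)]; exact hcond

/-- Under condition (51) on the model parameters, the integrand `f(r, ε; t)` in the
representation of `e^ε(1 − g2(t,ε))` is nonnegative. -/
theorem f_nonneg_under_condition (k σ1 σ2 μ1 ρ φ2 φ3 : ℝ)
    (hk : 0 < k) (hσ1 : 0 < σ1) (hσ2 : 0 < σ2) (hμ1 : 0 < μ1)
    (hρ : ρ ∈ Set.Icc (-1 : ℝ) 1) (hφ2 : 0 ≤ φ2) (hφ3 : 0 ≤ φ3)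
    (hcond : φ3 * Real.exp (1 + φ2 / k) ≥
      k * Real.exp (σ2 ^ 2 / (2 * k) + μ1 / k + (ρ / k) * σ1 * σ2))
    (mubar sigbarSq : ℝ → ℝ) (f : ℝ → ℝ → ℝ → ℝ)
    (hmubar : ∀ s, mubar s = Real.exp (-k * s))
    (hsigbarSq : ∀ s, sigbarSq s = σ2 ^ 2 / (2 * k) * (1 - Real.exp (-2 * k * s)))
    (hf : ∀ r ε t, f r ε t =
      Real.exp (mubar (r - t) * ε + sigbarSq (r - t) / 2
          + (ρ / k) * σ1 * σ2 * (1 - mubar (r - t))) *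
        (k * mubar (r - t) * ε + k * sigbarSq (r - t) - σ2 ^ 2 / 2
          - ρ * σ1 * σ2 * mubar (r - t) - μ1 + φ2) + φ3) :
    ∀ t r : ℝ, 0 ≤ t → t ≤ r → ∀ ε : ℝ, 0 ≤ f r ε t :=
  f_nonneg_under_condition_general k σ1 σ2 μ1 ρ φ2 φ3 hk hcond mubar sigbarSq f hsigbarSq hf
end

section
/- Fix real parameters k > 0, σ1 > 0, σ2 > 0, μ1 > 0, ρ ∈ [−1, 1], η > 0, φ1 > 0, φ2 ≥ 0, φ3 ≥ 0, χ > 0 and a horizon T > 0. Define g3(t) = √(φ1 η) · (e^{2t√(φ1/η)}(√(φ1 η) − χ) − e^{2T√(φ1/η)}(√(φ1 η) + χ)) / (e^{2t√(φ1/η)}(√(φ1 η) − χ) + e^{2T√(φ1/η)}(√(φ1 η) + χ)); μ̄(s) = e^{−k s}; σ̄(s)² = (σ2²/(2k))(1 − e^{−2 k s}); ĝ(r; t) = exp((1/η)·∫_t^r g3(s) ds + μ1·(r − t)); and g2(t, ε) = 1 − φ3·e^{−ε}·∫_t^T ĝ(r; t) dr − e^{−ε}·∫_t^T ĝ(r;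 t)·exp(μ̄(r−t)·ε + σ̄(r−t)²/2 + (ρ/k)·σ1·σ2·(1 − μ̄(r−t)))·(k·μ̄(r−t)·ε + k·σ̄(r−t)² − σ2²/2 − ρ·σ1·σ2·μ̄(r−t) − μ1 + φ2) dr. Then g2(T, ε) = 1 for all ε ∈ ℝ; and for every (t, ε) ∈ [0, T) × ℝ, the map t ↦ g2(t, ε) is differentiable at t, the map ε ↦ g2(t, ε) is twice differentiable at ε, and ∂_t g2(t,ε) + (σ2²/2)·∂²_ε g2(t,ε) + (σ2² + ρ σ1 σ2 − k ε)·∂_ε g2(t,ε) + (σ2²/2 + ρ σ1 σ2 + μ1 − k ε + g3(t)/η)·g2(t,ε) − φ2 − φ3 e^{−ε} − g3(t)/η = 0. -/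
/-!
With `L' = g3 / η + μ1` one has `ghat r t = exp (L r - L t)`, so
`g2 t ε = 1 - e^{-ε} e^{-L t} ∫_t^T e^{L r} (φ3 + K (r - t) ε) dr`,
where `K = (φ2 - μ1) M - ∂_y M` and `M y x` is the moment generating function of an
Ornstein–Uhlenbeck process with drift `ρσ1σ2 - kX` and volatility `σ2`, started at `x` and run
for time `y`. Like `M`, the kernel `K` solves the backward Kolmogorov equation
`∂_y K = σ2²/2 ∂²_x K + (ρσ1σ2 - kx) ∂_x K`. Differentiating under the integral sign (Duhamel's
principle), the `∫ ∂_y K` terms cancel against the spatial derivatives and only the boundary term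
`-e^{L t} (φ3 + K 0 ε)` of the moving lower limit survives; conjugating by `e^{-ε}` and `e^{-L t}`
turns this into the PDE for `g2`.
-/

open Real Function Filter Topology intervalIntegral

section ParametricIntegral

variable {E : Type*} [NormedAddCommGroup E] [NormedSpace ℝ E]
  {F F' : ℝ → ℝ → E}

theorem hasDerivAt_intervalIntegral_of_continuous {a b x₀ : ℝ} (hF : ∀ x, Continuous (F x))
    (hF' : Continuous (uncurry F')) (hd : ∀ x r, HasDerivAt (F · r) (F' x r) x) :
    HasDerivAt (fun x => ∫ r in a..b, F x r) (∫ r in a..b, F' x₀ r) x₀ := by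
  obtain ⟨C, hC⟩ :=
    ((isCompact_closedBall x₀ 1).prod isCompact_uIcc).exists_bound_of_continuousOn
      (hF'.continuousOn (s := Metric.closedBall x₀ 1 ×ˢ Set.uIcc a b))
  refine (hasDerivAt_integral_of_dominated_loc_of_deriv_le (bound := fun _ => C)
    (Metric.ball_mem_nhds x₀ one_pos) (.of_forall fun x => (hF x).aestronglyMeasurable)
    ((hF x₀).intervalIntegrable a b) (hF'.uncurry_left x₀).aestronglyMeasurable
    (.of_forall fun r hr x hx =>
      hC (x, r) ⟨Metric.ball_subset_closedBall hx, Set.uIoc_subset_uIcc hr⟩)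
    intervalIntegrable_const (.of_forall fun r _ x _ => hd x r)).2

theorem hasDerivAt_intervalIntegral_diag [CompleteSpace E] {x₀ : ℝ}
    (hF : Continuous (uncurry F)) :
    HasDerivAt (fun x => ∫ r in x₀..x, F x r) (F x₀ x₀) x₀ := by
  refine hasDerivAt_iff_isLittleO.2 (Asymptotics.isLittleO_iff.2 fun c hc => ?_)
  obtain ⟨δ, hδ, hFδ⟩ := Metric.continuousAt_iff.1 (hF.continuousAt (x := (x₀, x₀))) c hc
  filter_upwards [Metric.ball_mem_nhds x₀ hδ] with x (hx : dist x x₀ < δ)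
  have hnear : ∀ r ∈ Set.uIoc x₀ x, ‖F x r - F x₀ x₀‖ ≤ c := by
    intro r hr
    have hrx : dist r x₀ ≤ dist x x₀ := by
      rw [dist_comm r, dist_comm x]
      exact Real.dist_left_le_of_mem_uIcc (Set.uIoc_subset_uIcc hr)
    rw [← dist_eq_norm]
    exact (hFδ (x := (x, r)) (by rw [Prod.dist_eq]; exact max_lt hx (hrx.trans_lt hx))).le
  calc ‖(∫ r in x₀..x, F x r) - (∫ r in x₀..x₀, F x₀ r) - (x - x₀) • F x₀ x₀‖
      = ‖∫ r in x₀..x, (F x r - F x₀ x₀)‖ := by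
        rw [integral_same, sub_zero, integral_sub ((hF.uncurry_left x).intervalIntegrable _ _)
          intervalIntegrable_const, integral_const]
    _ ≤ c * |x - x₀| := norm_integral_le_of_norm_le_const hnear
    _ = c * ‖x - x₀‖ := by rw [Real.norm_eq_abs]

theorem hasDerivAt_intervalIntegral_lowerLimit [CompleteSpace E] {b x₀ : ℝ}
    (hF : Continuous (uncurry F)) (hF' : Continuous (uncurry F'))
    (hd : ∀ x r, HasDerivAt (F · r) (F' x r) x) :
    HasDerivAt (fun x => ∫ r in x..b, F x r) ((∫ r in x₀..b, F' x₀ r) - F x₀ x₀) x₀ := by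
  refine ((hasDerivAt_intervalIntegral_of_continuous hF.uncurry_left hF' hd).sub
    (hasDerivAt_intervalIntegral_diag hF)).congr_of_eventuallyEq (.of_forall fun x => ?_)
  exact (integral_interval_sub_left ((hF.uncurry_left x).intervalIntegrable _ _)
    ((hF.uncurry_left x).intervalIntegrable _ _)).symm

end ParametricIntegral

noncomputable section

def ouVariance (k σ y : ℝ) : ℝ := σ ^ 2 / (2 * k) * (1 - exp (-2 * k * y))

/-- `𝔼[exp X_y]` for `dX = (c - k X) dt + σ dB`, `X_0 = x`: the exponent is mean plus half the
variance. -/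
def ouMgf (k σ c y x : ℝ) : ℝ :=
  exp (exp (-k * y) * x + ouVariance k σ y / 2 + c / k * (1 - exp (-k * y)))

/-- `d * ouMgf - ∂_y ouMgf`, hence a solution of the same backward equation as `ouMgf`. -/
def ouKernel (k σ c d y x : ℝ) : ℝ :=
  ouMgf k σ c y x *
    (k * exp (-k * y) * x + k * ouVariance k σ y - σ ^ 2 / 2 - c * exp (-k * y) + d)

def ouKernelDeriv (k σ c d : ℝ) (n : ℕ) (y x : ℝ) : ℝ :=
  exp (-k * y) ^ n * ouKernel k σ c (d + n * k) y x

/-- The paper's formula for `g2`, with `ĝ(r; s) = exp (L r - L s)`. -/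
def ouFeynmanKac (L : ℝ → ℝ) (k σ c d e T s x : ℝ) : ℝ :=
  1 - e * exp (-x) * (∫ r in s..T, exp (L r - L s))
    - exp (-x) * ∫ r in s..T, exp (L r - L s) * ouKernel k σ c d (r - s) x

end

variable {k σ c d : ℝ}

theorem continuous_ouKernel : Continuous (uncurry (ouKernel k σ c d)) := by
  unfold ouKernel ouMgf ouVariance; fun_prop

theorem ouKernel_zero (x : ℝ) : ouKernel k σ c d 0 x = exp x * (k * x - σ ^ 2 / 2 - c + d) := by
  simp [ouKernel, ouMgf, ouVariance]

theorem hasDerivAt_ouKernel_snd (y x : ℝ) :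
    HasDerivAt (ouKernel k σ c d y) (exp (-k * y) * ouKernel k σ c (d + k) y x) x := by
  have hexp : HasDerivAt
      (fun x => exp (-k * y) * x + ouVariance k σ y / 2 + c / k * (1 - exp (-k * y)))
      (exp (-k * y) * 1 + 0 + 0) x :=
    (((hasDerivAt_id' x).const_mul _).add (hasDerivAt_const _ _)).add (hasDerivAt_const _ _)
  have hlin : HasDerivAt (fun x => k * exp (-k * y) * x + k * ouVariance k σ y - σ ^ 2 / 2
      - c * exp (-k * y) + d) (k * exp (-k * y) * 1 + 0 - 0 - 0 + 0) x :=
    (((((hasDerivAt_id' x).const_mul _).add (hasDerivAt_const _ _)).sub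
      (hasDerivAt_const _ _)).sub (hasDerivAt_const _ _)).add (hasDerivAt_const _ _)
  exact (hexp.exp.mul hlin).congr_deriv (by simp only [ouKernel, ouMgf]; ring)

theorem hasDerivAt_ouKernel_fst (hk : k ≠ 0) (y x : ℝ) :
    HasDerivAt (ouKernel k σ c d · x)
      (σ ^ 2 / 2 * ouKernelDeriv k σ c d 2 y x + (c - k * x) * ouKernelDeriv k σ c d 1 y x) y := by
  have hm : HasDerivAt (fun y => exp (-k * y)) (exp (-k * y) * (-k * 1)) y :=
    ((hasDerivAt_id' y).const_mul (-k)).exp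
  have hv : HasDerivAt (ouVariance k σ)
      (σ ^ 2 / (2 * k) * (0 - exp (-2 * k * y) * (-2 * k * 1))) y :=
    ((hasDerivAt_const y 1).sub ((hasDerivAt_id' y).const_mul (-2 * k)).exp).const_mul _
  have hexp : HasDerivAt
      (fun y => exp (-k * y) * x + ouVariance k σ y / 2 + c / k * (1 - exp (-k * y)))
      (exp (-k * y) * (-k * 1) * x + σ ^ 2 / (2 * k) * (0 - exp (-2 * k * y) * (-2 * k * 1)) / 2
        + c / k * (0 - exp (-k * y) * (-k * 1))) y :=
    ((hm.mul_const x).add (hv.div_const 2)).add (((hasDerivAt_const y 1).sub hm).const_mul _)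
  have hlin : HasDerivAt (fun y => k * exp (-k * y) * x + k * ouVariance k σ y - σ ^ 2 / 2
      - c * exp (-k * y) + d) (k * (exp (-k * y) * (-k * 1)) * x
        + k * (σ ^ 2 / (2 * k) * (0 - exp (-2 * k * y) * (-2 * k * 1))) - 0
        - c * (exp (-k * y) * (-k * 1)) + 0) y :=
    (((((hm.const_mul k).mul_const x).add (hv.const_mul k)).sub (hasDerivAt_const _ _)).sub
      (hm.const_mul c)).add (hasDerivAt_const _ _)
  have hsq : exp (-2 * k * y) = exp (-k * y) * exp (-k * y) := by rw [← exp_add]; ring_nf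
  refine (hexp.exp.mul hlin).congr_deriv ?_
  simp only [ouKernelDeriv, ouKernel, ouMgf, ouVariance, hsq]
  push_cast
  field_simp
  ring

theorem continuous_ouKernelDeriv (n : ℕ) : Continuous (uncurry (ouKernelDeriv k σ c d n)) := by
  unfold ouKernelDeriv ouKernel ouMgf ouVariance; fun_prop

theorem hasDerivAt_ouKernelDeriv (n : ℕ) (y x : ℝ) :
    HasDerivAt (ouKernelDeriv k σ c d n y) (ouKernelDeriv k σ c d (n + 1) y x) x := by
  refine ((hasDerivAt_ouKernel_snd y x).const_mul (exp (-k * y) ^ n)).congr_deriv ?_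
  rw [ouKernelDeriv, show d + ((n + 1 : ℕ) : ℝ) * k = d + n * k + k by push_cast; ring]
  ring

theorem ouKernelDeriv_zero : ouKernelDeriv k σ c d 0 = ouKernel k σ c d := by
  ext y x; simp [ouKernelDeriv]

section Duhamel

variable {f : ℝ → ℝ} {Ψ Ψ' : ℝ → ℝ → ℝ}

theorem hasDerivAt_duhamel_snd (hf : Continuous f) (hΨ : ∀ x, Continuous (Ψ · x))
    (hΨ' : Continuous (uncurry Ψ')) (hd : ∀ y x, HasDerivAt (Ψ y) (Ψ' y x) x) (T t x : ℝ) :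
    HasDerivAt (fun x => ∫ r in t..T, f r * Ψ (r - t) x) (∫ r in t..T, f r * Ψ' (r - t) x) x :=
  hasDerivAt_intervalIntegral_of_continuous (F := fun x r => f r * Ψ (r - t) x)
    (F' := fun x r => f r * Ψ' (r - t) x)
    (fun x => hf.mul ((hΨ x).comp (by fun_prop)))
    ((hf.comp continuous_snd).mul (hΨ'.comp (f := fun p : ℝ × ℝ => (p.2 - t, p.1)) (by fun_prop)))
    fun x r => (hd _ x).const_mul _

theorem hasDerivAt_duhamel_fst {x : ℝ} (hf : Continuous f) (hΨ : Continuous (Ψ · x))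
    (hΨ' : Continuous (Ψ' · x)) (hd : ∀ y, HasDerivAt (Ψ · x) (Ψ' y x) y) (T t : ℝ) :
    HasDerivAt (fun s => ∫ r in s..T, f r * Ψ (r - s) x)
      (-(f t * Ψ 0 x) - ∫ r in t..T, f r * Ψ' (r - t) x) t := by
  have hF : Continuous (uncurry fun s r => f r * Ψ (r - s) x) :=
    (hf.comp continuous_snd).mul (hΨ.comp (by fun_prop))
  have hF' : Continuous (uncurry fun s r => -(f r * Ψ' (r - s) x)) :=
    ((hf.comp continuous_snd).mul (hΨ'.comp (by fun_prop))).neg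
  have hd' : ∀ s r, HasDerivAt (fun s => f r * Ψ (r - s) x) (-(f r * Ψ' (r - s) x)) s := fun s r =>
    ((hd (r - s)).comp s ((hasDerivAt_id' s).const_sub r)).const_mul (f r) |>.congr_deriv (by ring)
  refine (hasDerivAt_intervalIntegral_lowerLimit hF hF' hd').congr_deriv ?_
  rw [integral_neg, sub_self]
  ring

end Duhamel

theorem hasDerivAt_duhamel_ouKernel_fst (hk : k ≠ 0) {f : ℝ → ℝ} (hf : Continuous f)
    (e T t x : ℝ) :
    HasDerivAt (fun s => ∫ r in s..T, f r * (e + ouKernel k σ c d (r - s) x))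
      (-(f t * (e + exp x * (k * x - σ ^ 2 / 2 - c + d)))
        - σ ^ 2 / 2 * (∫ r in t..T, f r * ouKernelDeriv k σ c d 2 (r - t) x)
        - (c - k * x) * ∫ r in t..T, f r * ouKernelDeriv k σ c d 1 (r - t) x) t := by
  have hKc : ∀ n, Continuous (ouKernelDeriv k σ c d n · x) := fun n =>
    (continuous_ouKernelDeriv n).uncurry_right x
  have hK : ∀ n : ℕ, IntervalIntegrable (fun r => f r * ouKernelDeriv k σ c d n (r - t) x)
      MeasureTheory.volume t T := fun n =>
    (hf.mul ((hKc n).comp (continuous_sub_right t))).intervalIntegrable _ _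
  have hsplit : ∫ r in t..T, f r * (σ ^ 2 / 2 * ouKernelDeriv k σ c d 2 (r - t) x
        + (c - k * x) * ouKernelDeriv k σ c d 1 (r - t) x)
      = σ ^ 2 / 2 * (∫ r in t..T, f r * ouKernelDeriv k σ c d 2 (r - t) x)
        + (c - k * x) * ∫ r in t..T, f r * ouKernelDeriv k σ c d 1 (r - t) x := by
    rw [← integral_const_mul, ← integral_const_mul, ← integral_add ((hK 2).const_mul _)
      ((hK 1).const_mul _)]
    congr 1
    ext r
    ring
  refine (hasDerivAt_duhamel_fst (Ψ := fun y x => e + ouKernel k σ c d y x)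
    (Ψ' := fun y x => σ ^ 2 / 2 * ouKernelDeriv k σ c d 2 y x
      + (c - k * x) * ouKernelDeriv k σ c d 1 y x) hf
    (continuous_const.add (continuous_ouKernel.uncurry_right x))
    (((hKc 2).const_mul _).add ((hKc 1).const_mul _))
    (fun y => (hasDerivAt_ouKernel_fst hk y x).const_add e) T t).congr_deriv ?_
  rw [hsplit, ouKernel_zero]
  ring

theorem ouFeynmanKac_eq {L : ℝ → ℝ} (hL : Continuous L) (e T : ℝ) :
    ouFeynmanKac L k σ c d e T
      = fun s x => 1 - exp (-x) *
        (exp (-L s) * ∫ r in s..T, exp (L r) * (e + ouKernel k σ c d (r - s) x)) := by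
  ext s x
  have hK : Continuous fun r => exp (L r) * ouKernel k σ c d (r - s) x :=
    hL.rexp.mul ((continuous_ouKernel.uncurry_right x).comp (continuous_sub_right s))
  have hKe : Continuous fun r => exp (L r) * e := by fun_prop
  simp only [ouFeynmanKac, exp_sub, div_eq_mul_inv, mul_add,
    integral_add (hKe.intervalIntegrable s T) (hK.intervalIntegrable s T), integral_mul_const,
    mul_right_comm _ (exp (L s))⁻¹, exp_neg]
  ring

theorem ouFeynmanKac_pde {L : ℝ → ℝ} {ℓ t : ℝ} (hk : k ≠ 0) (hL : Continuous L)
    (hLt : HasDerivAt L ℓ t) (e T x : ℝ) :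
    DifferentiableAt ℝ (ouFeynmanKac L k σ c d e T · x) t ∧
      DifferentiableAt ℝ (ouFeynmanKac L k σ c d e T t) x ∧
      DifferentiableAt ℝ (deriv (ouFeynmanKac L k σ c d e T t)) x ∧
      deriv (ouFeynmanKac L k σ c d e T · x) t
        + σ ^ 2 / 2 * deriv (deriv (ouFeynmanKac L k σ c d e T t)) x
        + (σ ^ 2 + c - k * x) * deriv (ouFeynmanKac L k σ c d e T t) x
        + (σ ^ 2 / 2 + c - k * x + ℓ) * ouFeynmanKac L k σ c d e T t x
        - d - ℓ - e * exp (-x) = 0 := by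
  set w : ℝ → ℝ → ℝ := fun s z => ∫ r in s..T, exp (L r) * (e + ouKernel k σ c d (r - s) z)
  set W : ℕ → ℝ → ℝ := fun n z => ∫ r in t..T, exp (L r) * ouKernelDeriv k σ c d n (r - t) z
  have hf : Continuous fun r => exp (L r) := hL.rexp
  have hw₁ : ∀ z, HasDerivAt (w t) (W 1 z) z := hasDerivAt_duhamel_snd hf
    (fun z => continuous_const.add (continuous_ouKernel.uncurry_right z))
    (continuous_ouKernelDeriv 1) (fun y z => by
      simpa [ouKernelDeriv_zero] using (hasDerivAt_ouKernelDeriv 0 y z).const_add e)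
    T t
  have hw₂ : HasDerivAt (W 1) (W 2 x) x := hasDerivAt_duhamel_snd hf
    (fun z => (continuous_ouKernelDeriv 1).uncurry_right z) (continuous_ouKernelDeriv 2)
    (hasDerivAt_ouKernelDeriv 1) T t x
  have hwt := hasDerivAt_duhamel_ouKernel_fst (σ := σ) (c := c) (d := d) hk hf e T t x
  have hu : ouFeynmanKac L k σ c d e T = fun s z => 1 - exp (-z) * (exp (-L s) * w s z) :=
    ouFeynmanKac_eq hL e T
  have hux : ∀ z, HasDerivAt (ouFeynmanKac L k σ c d e T t)
      (exp (-z) * (exp (-L t) * (w t z - W 1 z))) z := fun z => by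
    rw [hu]
    exact (((hasDerivAt_neg' z).exp.mul ((hw₁ z).const_mul _)).const_sub 1).congr_deriv (by ring)
  have huxx : HasDerivAt (deriv (ouFeynmanKac L k σ c d e T t))
      (exp (-x) * (exp (-L t) * (2 * W 1 x - W 2 x - w t x))) x := by
    rw [funext fun z => (hux z).deriv]
    exact ((hasDerivAt_neg' x).exp.mul (((hw₁ x).sub hw₂).const_mul _)).congr_deriv
      (by simp only [Pi.sub_apply]; ring)
  have hut := (((hLt.neg.exp.mul hwt).const_mul (exp (-x))).const_sub 1).congr_of_eventuallyEq
    (f₁ := (ouFeynmanKac L k σ c d e T · x)) (.of_forall fun s => congrFun (congrFun hu s) x)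
  refine ⟨hut.differentiableAt, (hux x).differentiableAt, huxx.differentiableAt, ?_⟩
  rw [hut.deriv, (hux x).deriv, huxx.deriv, hu]
  simp only [w, W, Pi.neg_apply, exp_neg]
  field_simp
  ring

theorem exists_primitive_of_continuousOn_Iic {g : ℝ → ℝ} {T : ℝ} (hg : ContinuousOn g (Set.Iic T)) :
    ∃ G : ℝ → ℝ, Continuous G ∧ (∀ t < T, HasDerivAt G (g t) t) ∧
      ∀ s ≤ T, ∀ r ≤ T, ∫ u in s..r, g u = G r - G s := by
  have hgT : Continuous fun u => g (min u T) :=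
    hg.comp_continuous (continuous_id.min continuous_const) fun u => min_le_right u T
  have hG : ∀ t, HasDerivAt (fun x => ∫ u in (0 : ℝ)..x, g (min u T)) (g (min t T)) t :=
    fun t => (hgT.integral_hasStrictDerivAt 0 t).hasDerivAt
  refine ⟨_, continuous_iff_continuousAt.2 fun t => (hG t).continuousAt,
    fun t ht => (hG t).congr_deriv (by rw [min_eq_left ht.le]), fun s hs r hr => ?_⟩
  rw [integral_interval_sub_left (hgT.intervalIntegrable _ _) (hgT.intervalIntegrable _ _)]
  refine integral_congr fun u hu => ?_
  simp only [min_eq_left ((Set.mem_uIcc.1 hu).elim (fun h => h.2.trans hr) (fun h => h.2.trans hs))]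

theorem continuousOn_riccati {a χ s T : ℝ} (ha : 0 < a) (hχ : 0 ≤ χ) (hs : 0 ≤ s) :
    ContinuousOn (fun t => a * (exp (2 * t * s) * (a - χ) - exp (2 * T * s) * (a + χ)) /
      (exp (2 * t * s) * (a - χ) + exp (2 * T * s) * (a + χ))) (Set.Iic T) := by
  refine ContinuousOn.div (by fun_prop) (by fun_prop) fun t ht => ne_of_gt ?_
  have : exp (2 * t * s) ≤ exp (2 * T * s) :=
    exp_le_exp.2 (mul_le_mul_of_nonneg_right (by linarith [Set.mem_Iic.1 ht]) hs)
  -- the denominator is `a (e^{2ts} + e^{2Ts}) + χ (e^{2Ts} - e^{2ts})`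
  nlinarith [exp_pos (2 * t * s)]

theorem g2_solves_pde_general (k σ1 σ2 μ1 ρ η φ1 φ2 φ3 χ T : ℝ)
    (hk : 0 < k) (hη : 0 < η) (hφ1 : 0 < φ1) (hχ : 0 < χ)
    (g3 : ℝ → ℝ) (mubar sigbarSq : ℝ → ℝ) (ghat : ℝ → ℝ → ℝ) (g2 : ℝ → ℝ → ℝ)
    (hg3 : ∀ t, g3 t =
      Real.sqrt (φ1 * η) *
        (Real.exp (2 * t * Real.sqrt (φ1 / η)) * (Real.sqrt (φ1 * η) - χ)
          - Real.exp (2 * T * Real.sqrt (φ1 / η)) * (Real.sqrt (φ1 * η) + χ)) /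
        (Real.exp (2 * t * Real.sqrt (φ1 / η)) * (Real.sqrt (φ1 * η) - χ)
          + Real.exp (2 * T * Real.sqrt (φ1 / η)) * (Real.sqrt (φ1 * η) + χ)))
    (hmubar : ∀ s, mubar s = Real.exp (-k * s))
    (hsigbarSq : ∀ s, sigbarSq s = σ2 ^ 2 / (2 * k) * (1 - Real.exp (-2 * k * s)))
    (hghat : ∀ t r, ghat r t =
      Real.exp ((1 / η) * (∫ s in t..r, g3 s) + μ1 * (r - t)))
    (hg2 : ∀ t ε, g2 t ε =
      1 - φ3 * Real.exp (-ε) * (∫ r in t..T, ghat r t)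
        - Real.exp (-ε) * ∫ r in t..T, ghat r t *
            Real.exp (mubar (r - t) * ε + sigbarSq (r - t) / 2
              + (ρ / k) * σ1 * σ2 * (1 - mubar (r - t))) *
            (k * mubar (r - t) * ε + k * sigbarSq (r - t) - σ2 ^ 2 / 2
              - ρ * σ1 * σ2 * mubar (r - t) - μ1 + φ2)) :
    (∀ ε : ℝ, g2 T ε = 1) ∧
    ∀ t ∈ Set.Ico (0 : ℝ) T, ∀ ε : ℝ,
      DifferentiableAt ℝ (fun s => g2 s ε) t ∧
      DifferentiableAt ℝ (fun x => g2 t x) ε ∧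
      DifferentiableAt ℝ (deriv (fun x => g2 t x)) ε ∧
      deriv (fun s => g2 s ε) t
        + σ2 ^ 2 / 2 * deriv (deriv (fun x => g2 t x)) ε
        + (σ2 ^ 2 + ρ * σ1 * σ2 - k * ε) * deriv (fun x => g2 t x) ε
        + (σ2 ^ 2 / 2 + ρ * σ1 * σ2 + μ1 - k * ε + g3 t / η) * g2 t ε
        - φ2 - φ3 * Real.exp (-ε) - g3 t / η = 0 := by
  refine ⟨fun ε => by simp [hg2], fun t ht ε => ?_⟩
  have htT : t < T := ht.2
  obtain ⟨G, hGc, hG, hGint⟩ := exists_primitive_of_continuousOn_Iic (funext hg3 ▸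
    continuousOn_riccati (sqrt_pos.2 (mul_pos hφ1 hη)) hχ.le (sqrt_nonneg (φ1 / η)))
  set L : ℝ → ℝ := fun s => G s / η + μ1 * s with hL
  have hg2L : ∀ s ≤ T, g2 s = ouFeynmanKac L k σ2 (ρ * σ1 * σ2) (φ2 - μ1) φ3 T s := by
    intro s hs
    have hghatL : ∀ r ∈ Set.uIcc s T, ghat r s = exp (L r - L s) := fun r hr => by
      rw [hghat, hGint s hs r ((Set.mem_uIcc.1 hr).elim (fun h => h.2) fun h => h.2.trans hs), hL]
      ring_nf
    ext x
    rw [hg2, ouFeynmanKac, integral_congr hghatL]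
    congr 2
    refine integral_congr fun r hr => ?_
    simp only [hghatL r hr, hmubar, hsigbarSq, ouKernel, ouMgf, ouVariance]
    ring_nf
  have hnear : (g2 · ε) =ᶠ[𝓝 t] (ouFeynmanKac L k σ2 (ρ * σ1 * σ2) (φ2 - μ1) φ3 T · ε) :=
    (eventually_lt_nhds htT).mono fun s hs => congrFun (hg2L s hs.le) ε
  have hLt : HasDerivAt L (g3 t / η + μ1) t :=
    ((hG t htT).div_const η).add ((hasDerivAt_id' t).const_mul μ1) |>.congr_deriv (by ring)
  obtain ⟨h₁, h₂, h₃, hpde⟩ := ouFeynmanKac_pde hk.ne' (by fun_prop) hLt φ3 T ε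
  rw [hg2L t htT.le]
  refine ⟨hnear.differentiableAt_iff.2 h₁, h₂, h₃, ?_⟩
  rw [hnear.deriv_eq]
  linear_combination hpde

/-- The explicit formula `g2` is a classical solution of the second parabolic PDE of the
HJB system, with terminal condition `g2(T, ·) = 1`. -/
theorem g2_solves_pde (k σ1 σ2 μ1 ρ η φ1 φ2 φ3 χ T : ℝ)
    (hk : 0 < k) (hσ1 : 0 < σ1) (hσ2 : 0 < σ2) (hμ1 : 0 < μ1)
    (hρ : ρ ∈ Set.Icc (-1 : ℝ) 1) (hη : 0 < η) (hφ1 : 0 < φ1) (hφ2 : 0 ≤ φ2)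
    (hφ3 : 0 ≤ φ3) (hχ : 0 < χ) (hT : 0 < T)
    (g3 : ℝ → ℝ) (mubar sigbarSq : ℝ → ℝ) (ghat : ℝ → ℝ → ℝ) (g2 : ℝ → ℝ → ℝ)
    (hg3 : ∀ t, g3 t =
      Real.sqrt (φ1 * η) *
        (Real.exp (2 * t * Real.sqrt (φ1 / η)) * (Real.sqrt (φ1 * η) - χ)
          - Real.exp (2 * T * Real.sqrt (φ1 / η)) * (Real.sqrt (φ1 * η) + χ)) /
        (Real.exp (2 * t * Real.sqrt (φ1 / η)) * (Real.sqrt (φ1 * η) - χ)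
          + Real.exp (2 * T * Real.sqrt (φ1 / η)) * (Real.sqrt (φ1 * η) + χ)))
    (hmubar : ∀ s, mubar s = Real.exp (-k * s))
    (hsigbarSq : ∀ s, sigbarSq s = σ2 ^ 2 / (2 * k) * (1 - Real.exp (-2 * k * s)))
    (hghat : ∀ t r, ghat r t =
      Real.exp ((1 / η) * (∫ s in t..r, g3 s) + μ1 * (r - t)))
    (hg2 : ∀ t ε, g2 t ε =
      1 - φ3 * Real.exp (-ε) * (∫ r in t..T, ghat r t)
        - Real.exp (-ε) * ∫ r in t..T, ghat r t *
            Real.exp (mubar (r - t) * ε + sigbarSq (r - t) / 2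
              + (ρ / k) * σ1 * σ2 * (1 - mubar (r - t))) *
            (k * mubar (r - t) * ε + k * sigbarSq (r - t) - σ2 ^ 2 / 2
              - ρ * σ1 * σ2 * mubar (r - t) - μ1 + φ2)) :
    (∀ ε : ℝ, g2 T ε = 1) ∧
    ∀ t ∈ Set.Ico (0 : ℝ) T, ∀ ε : ℝ,
      DifferentiableAt ℝ (fun s => g2 s ε) t ∧
      DifferentiableAt ℝ (fun x => g2 t x) ε ∧
      DifferentiableAt ℝ (deriv (fun x => g2 t x)) ε ∧
      deriv (fun s => g2 s ε) t
        + σ2 ^ 2 / 2 * deriv (deriv (fun x => g2 t x)) ε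
        + (σ2 ^ 2 + ρ * σ1 * σ2 - k * ε) * deriv (fun x => g2 t x) ε
        + (σ2 ^ 2 / 2 + ρ * σ1 * σ2 + μ1 - k * ε + g3 t / η) * g2 t ε
        - φ2 - φ3 * Real.exp (-ε) - g3 t / η = 0 :=
  g2_solves_pde_general k σ1 σ2 μ1 ρ η φ1 φ2 φ3 χ T hk hη hφ1 hχ g3 mubar sigbarSq ghat g2 hg3
    hmubar hsigbarSq hghat hg2
end

section
/- Fix real parameters k > 0, σ1 > 0, σ2 > 0, μ1 > 0, ρ ∈ [−1, 1], η > 0, φ1 > 0, φ2 ≥ 0, φ3 ≥ 0, χ > 0, a horizon T > 0, and Q̄0 > 0. Define g3(t) = √(φ1 η) · (e^{2t√(φ1/η)}(√(φ1 η) − χ) − e^{2T√(φ1/η)}(√(φ1 η) + χ)) / (e^{2t√(φ1/η)}(√(φ1 η) − χ) + e^{2T√(φ1/η)}(√(φ1 η) + χ)); μ̄(s) = e^{−k s}; σ̄(s)² = (σ2²/(2k))(1 − e^{−2 k s}); ĝ(r; t) = exp((1/η)·∫_t^r g3(s) ds + μ1·(r − t)); g2(t, ε) = 1 − φ3·e^{−ε}·∫_t^T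 ĝ(r; t) dr − e^{−ε}·∫_t^T ĝ(r; t)·exp(μ̄(r−t)·ε + σ̄(r−t)²/2 + (ρ/k)·σ1·σ2·(1 − μ̄(r−t)))·(k·μ̄(r−t)·ε + k·σ̄(r−t)² − σ2²/2 − ρ·σ1·σ2·μ̄(r−t) − μ1 + φ2) dr; and c*(t, a, ε, q) = (1/(2η))·(a·e^ε·(1 − g2(t, ε)) − 2·q·g3(t)) if q > 0, and c*(t, a, ε, 0) = 0. Then there exists a constant C > 0 such that for all t ∈ [0, T], a > 0, ε ∈ ℝ and q ∈ [0, Q̄0]: |c*(t, a, ε, q)| ≤ C·(1 + q)·(1 + a)·(1 + e^{C·|ε|}). -/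
open Real Set

/-! On `[0, T]` the denominator of `g3` never drops below `√(φ1 η)`, so `g3` is bounded, and
hence so is `ĝ`. In `e^ε (1 - g2 t ε)` the factor `e^{-ε}` cancels; since `μ̄ ∈ [0, 1]`, the
remaining integrand is an exponential of size at most `e^{|ε|}` times a factor affine in `|ε|`,
so `|e^ε (1 - g2 t ε)| ≤ M e^{2|ε|}`. The formula for `c*` then gives
`|c*| ≤ (a M e^{2|ε|} + 2 q B) / (2η)`, and any `C ≥ 2` absorbing the constants works. -/

theorem abs_intervalIntegral_le_of_abs_le {f : ℝ → ℝ} {a b C : ℝ} (hab : a ≤ b)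
    (h : ∀ x ∈ Ioc a b, |f x| ≤ C) : |∫ x in a..b, f x| ≤ C * (b - a) := by
  have := intervalIntegral.norm_integral_le_of_norm_le_const (f := f) (C := C)
    (by rwa [uIoc_of_le hab])
  rwa [abs_of_nonneg (sub_nonneg.mpr hab)] at this

theorem abs_mul_le_abs_of_abs_le_one {m x : ℝ} (hm : |m| ≤ 1) : |m * x| ≤ |x| := by
  rw [abs_mul]
  exact mul_le_of_le_one_left (abs_nonneg x) hm

theorem abs_mul_sub_div_add_le {s χ u v : ℝ} (hs : 0 < s) (hχ : 0 < χ) (hu : 1 ≤ u)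
    (huv : u ≤ v) :
    |s * (u * (s - χ) - v * (s + χ)) / (u * (s - χ) + v * (s + χ))| ≤ 2 * v * (s + χ) := by
  have hD : s ≤ u * (s - χ) + v * (s + χ) := by nlinarith
  have hN : |u * (s - χ) - v * (s + χ)| ≤ 2 * v * (s + χ) := by
    rw [abs_le]; constructor <;> nlinarith
  rw [abs_div, abs_mul, abs_of_pos hs, abs_of_pos (hs.trans_le hD),
    div_le_iff₀ (hs.trans_le hD)]
  nlinarith [abs_nonneg (u * (s - χ) - v * (s + χ))]

theorem exp_integral_add_le {g : ℝ → ℝ} {η μ B T t r : ℝ} (hη : 0 < η) (hμ : 0 ≤ μ)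
    (hB : 0 ≤ B) (hg : ∀ x ∈ Icc 0 T, |g x| ≤ B) (ht : 0 ≤ t) (htr : t ≤ r) (hr : r ≤ T) :
    exp (1 / η * (∫ s in t..r, g s) + μ * (r - t)) ≤ exp ((B / η + μ) * T) := by
  have hint : |∫ s in t..r, g s| ≤ B * (r - t) :=
    abs_intervalIntegral_le_of_abs_le htr fun x hx => hg x ⟨ht.trans hx.1.le, hx.2.trans hr⟩
  have hint' := (le_abs_self _).trans hint
  rw [exp_le_exp]
  calc 1 / η * (∫ s in t..r, g s) + μ * (r - t) ≤ (B / η + μ) * (r - t) := by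
        rw [add_mul, one_div_mul_eq_div, div_mul_eq_mul_div]
        gcongr
    _ ≤ (B / η + μ) * T := by gcongr; linarith

section MomentFactor

variable {k σ1 σ2 μ1 ρ φ2 m v : ℝ}

theorem moment_exponent_le (hk : 0 < k) (hσ : 0 ≤ σ1 * σ2) (hρ : |ρ| ≤ 1)
    (hm : m ∈ Icc 0 1) (hv : v ≤ σ2 ^ 2 / (2 * k)) (ε : ℝ) :
    m * ε + v / 2 + ρ / k * σ1 * σ2 * (1 - m) ≤ |ε| + (σ2 ^ 2 / (4 * k) + σ1 * σ2 / k) := by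
  have hmε := (le_abs_self _).trans
    (abs_mul_le_abs_of_abs_le_one (x := ε) ((abs_of_nonneg hm.1).trans_le hm.2))
  have hρm : ρ * (1 - m) ≤ 1 := (le_abs_self _).trans <| by
    rw [abs_mul, abs_of_nonneg (sub_nonneg.mpr hm.2)]
    nlinarith [abs_nonneg ρ, hm.1]
  have : ρ / k * σ1 * σ2 * (1 - m) ≤ σ1 * σ2 / k := by
    rw [show ρ / k * σ1 * σ2 * (1 - m) = σ1 * σ2 / k * (ρ * (1 - m)) by ring]
    exact mul_le_of_le_one_right (div_nonneg hσ hk.le) hρm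
  have : v / 2 ≤ σ2 ^ 2 / (4 * k) := by
    rw [show σ2 ^ 2 / (4 * k) = σ2 ^ 2 / (2 * k) / 2 by ring]; linarith
  linarith

theorem abs_moment_factor_le (hk : 0 < k) (hσ : 0 ≤ σ1 * σ2) (hμ1 : 0 ≤ μ1) (hρ : |ρ| ≤ 1)
    (hφ2 : 0 ≤ φ2) (hm : m ∈ Icc 0 1) (hv : v ∈ Icc 0 (σ2 ^ 2 / (2 * k))) (ε : ℝ) :
    |k * m * ε + k * v - σ2 ^ 2 / 2 - ρ * σ1 * σ2 * m - μ1 + φ2|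
      ≤ k * |ε| + (σ2 ^ 2 + σ1 * σ2 + μ1 + φ2) := by
  have habsm : |m| ≤ 1 := (abs_of_nonneg hm.1).trans_le hm.2
  have hmε := abs_le.mp (abs_mul_le_abs_of_abs_le_one (x := ε) habsm)
  have hρm := abs_le.mp ((abs_mul_le_abs_of_abs_le_one (x := m) hρ).trans habsm)
  have hkv : k * v ≤ σ2 ^ 2 / 2 := by
    have := mul_le_mul_of_nonneg_left hv.2 hk.le
    rwa [mul_div_assoc', mul_comm 2 k, ← div_div, mul_div_cancel_left₀ _ hk.ne'] at this
  have hkv0 : 0 ≤ k * v := mul_nonneg hk.le hv.1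
  rw [abs_le]
  constructor <;> nlinarith [sq_nonneg σ2]

theorem abs_exp_mul_moment_factor_le (hk : 0 < k) (hσ : 0 ≤ σ1 * σ2) (hμ1 : 0 ≤ μ1)
    (hρ : |ρ| ≤ 1) (hφ2 : 0 ≤ φ2) (hm : m ∈ Icc 0 1) (hv : v ∈ Icc 0 (σ2 ^ 2 / (2 * k)))
    (ε : ℝ) :
    |exp (m * ε + v / 2 + ρ / k * σ1 * σ2 * (1 - m))
        * (k * m * ε + k * v - σ2 ^ 2 / 2 - ρ * σ1 * σ2 * m - μ1 + φ2)|
      ≤ exp (σ2 ^ 2 / (4 * k) + σ1 * σ2 / k) * (k + (σ2 ^ 2 + σ1 * σ2 + μ1 + φ2))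
        * exp (2 * |ε|) := by
  have hexp : exp (m * ε + v / 2 + ρ / k * σ1 * σ2 * (1 - m))
      ≤ exp (σ2 ^ 2 / (4 * k) + σ1 * σ2 / k) * exp |ε| := by
    rw [← exp_add, exp_le_exp]
    linarith [moment_exponent_le hk hσ hρ hm hv.2 ε]
  have hK2 : 0 ≤ σ2 ^ 2 + σ1 * σ2 + μ1 + φ2 := by positivity
  have hfactor : k * |ε| + (σ2 ^ 2 + σ1 * σ2 + μ1 + φ2)
      ≤ (k + (σ2 ^ 2 + σ1 * σ2 + μ1 + φ2)) * exp |ε| := by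
    have h1 : |ε| ≤ exp |ε| := by linarith [add_one_le_exp |ε|]
    have h2 : 1 ≤ exp |ε| := one_le_exp (abs_nonneg ε)
    nlinarith
  rw [abs_mul, abs_of_pos (exp_pos _), two_mul, exp_add |ε| |ε|]
  calc _ ≤ exp (σ2 ^ 2 / (4 * k) + σ1 * σ2 / k) * exp |ε|
        * ((k + (σ2 ^ 2 + σ1 * σ2 + μ1 + φ2)) * exp |ε|) :=
        mul_le_mul hexp ((abs_moment_factor_le hk hσ hμ1 hρ hφ2 hm hv ε).trans hfactor)
          (abs_nonneg _) (by positivity)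
    _ = _ := by ring

end MomentFactor

theorem exp_mem_Icc_of_nonpos {x : ℝ} (hx : x ≤ 0) : exp x ∈ Icc 0 1 :=
  ⟨(exp_pos x).le, exp_le_one_iff.mpr hx⟩

theorem mul_one_sub_exp_mem_Icc_of_nonpos {c x : ℝ} (hc : 0 ≤ c) (hx : x ≤ 0) :
    c * (1 - exp x) ∈ Icc 0 c := by
  have := exp_mem_Icc_of_nonpos hx
  exact ⟨mul_nonneg hc (by linarith [this.2]), mul_le_of_le_one_right hc (by linarith [this.1])⟩

theorem abs_exp_mul_one_sub_g2_le {k σ1 σ2 μ1 ρ φ2 φ3 T G t ε : ℝ} (hk : 0 < k)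
    (hσ : 0 ≤ σ1 * σ2) (hμ1 : 0 ≤ μ1) (hρ : |ρ| ≤ 1) (hφ2 : 0 ≤ φ2) (hφ3 : 0 ≤ φ3)
    (hG : 0 ≤ G) (ht : t ∈ Icc 0 T) {mubar sigbarSq : ℝ → ℝ} {ghat g2 : ℝ → ℝ → ℝ}
    (hghat : ∀ r ∈ Ioc t T, |ghat r t| ≤ G)
    (hmubar : ∀ s, mubar s = exp (-k * s))
    (hsigbarSq : ∀ s, sigbarSq s = σ2 ^ 2 / (2 * k) * (1 - exp (-2 * k * s)))
    (hg2 : g2 t ε =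
      1 - φ3 * exp (-ε) * (∫ r in t..T, ghat r t)
        - exp (-ε) * ∫ r in t..T, ghat r t *
            exp (mubar (r - t) * ε + sigbarSq (r - t) / 2
              + (ρ / k) * σ1 * σ2 * (1 - mubar (r - t))) *
            (k * mubar (r - t) * ε + k * sigbarSq (r - t) - σ2 ^ 2 / 2
              - ρ * σ1 * σ2 * mubar (r - t) - μ1 + φ2)) :
    |exp ε * (1 - g2 t ε)|
      ≤ (φ3 + exp (σ2 ^ 2 / (4 * k) + σ1 * σ2 / k) * (k + (σ2 ^ 2 + σ1 * σ2 + μ1 + φ2)))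
        * G * T * exp (2 * |ε|) := by
  set K := exp (σ2 ^ 2 / (4 * k) + σ1 * σ2 / k) * (k + (σ2 ^ 2 + σ1 * σ2 + μ1 + φ2))
  have hcancel : ∀ x y : ℝ, exp ε * (1 - (1 - φ3 * exp (-ε) * x - exp (-ε) * y)) = φ3 * x + y :=
    fun x y => by rw [exp_neg]; field_simp; ring
  have hT : 0 ≤ T := ht.1.trans ht.2
  have hI1 : |φ3 * ∫ r in t..T, ghat r t| ≤ φ3 * (G * T) := by
    rw [abs_mul, abs_of_nonneg hφ3]
    refine mul_le_mul_of_nonneg_left ((abs_intervalIntegral_le_of_abs_le ht.2 hghat).trans ?_) hφ3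
    exact mul_le_mul_of_nonneg_left (by linarith [ht.1]) hG
  rw [hg2, hcancel]
  calc _ ≤ |φ3 * ∫ r in t..T, ghat r t| + |∫ r in t..T, _| := abs_add_le _ _
    _ ≤ φ3 * (G * T) + G * (K * exp (2 * |ε|)) * T := by
        refine add_le_add hI1 ((abs_intervalIntegral_le_of_abs_le
          (C := G * (K * exp (2 * |ε|))) ht.2 fun r hr => ?_).trans ?_)
        · have hs : 0 ≤ r - t := sub_nonneg.mpr hr.1.le
          rw [mul_assoc, abs_mul]
          refine mul_le_mul (hghat r hr) (abs_exp_mul_moment_factor_le hk hσ hμ1 hρ hφ2 ?_ ?_ ε)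
            (abs_nonneg _) hG
          · rw [hmubar]
            exact exp_mem_Icc_of_nonpos (by nlinarith)
          · rw [hsigbarSq]
            exact mul_one_sub_exp_mem_Icc_of_nonpos (by positivity) (by nlinarith)
        · exact mul_le_mul_of_nonneg_left (by linarith [ht.1]) (by positivity)
    _ ≤ (φ3 + K) * G * T * exp (2 * |ε|) := by
        have := mul_le_mul_of_nonneg_left (one_le_exp (by positivity : 0 ≤ 2 * |ε|))
          (mul_nonneg (mul_nonneg hφ3 hG) hT)
        linarith

theorem exists_growth_bound_of_abs_le {η T B M : ℝ} (hη : 0 < η) (hB : 0 ≤ B) (hM : 0 ≤ M)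
    {g3 : ℝ → ℝ} {g2 : ℝ → ℝ → ℝ} {cstar : ℝ → ℝ → ℝ → ℝ → ℝ}
    (hg3 : ∀ t ∈ Icc 0 T, |g3 t| ≤ B)
    (hg2 : ∀ t ∈ Icc 0 T, ∀ ε, |exp ε * (1 - g2 t ε)| ≤ M * exp (2 * |ε|))
    (hcstar_pos : ∀ t a ε q, 0 < q → cstar t a ε q =
      1 / (2 * η) * (a * exp ε * (1 - g2 t ε) - 2 * q * g3 t))
    (hcstar_zero : ∀ t a ε, cstar t a ε 0 = 0) :
    ∃ C, 0 < C ∧ ∀ t ∈ Icc 0 T, ∀ a, 0 ≤ a → ∀ ε, ∀ q, 0 ≤ q →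
      |cstar t a ε q| ≤ C * (1 + q) * (1 + a) * (1 + exp (C * |ε|)) := by
  set C := 2 + M / (2 * η) + B / η
  have hM' : 0 ≤ M / (2 * η) := by positivity
  have hB' : 0 ≤ B / η := by positivity
  refine ⟨C, by positivity, fun t ht a ha ε q hq => ?_⟩
  have heC : 1 ≤ exp (C * |ε|) := one_le_exp (by positivity)
  rcases hq.eq_or_lt with rfl | hq
  · rw [hcstar_zero, abs_zero]
    positivity
  have hcore : |a * exp ε * (1 - g2 t ε)| ≤ a * (M * exp (2 * |ε|)) := by
    rw [mul_assoc, abs_mul, abs_of_nonneg ha]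
    exact mul_le_mul_of_nonneg_left (hg2 t ht ε) ha
  have hlin : |2 * q * g3 t| ≤ 2 * q * B := by
    rw [abs_mul, abs_of_pos (by positivity : 0 < 2 * q)]
    exact mul_le_mul_of_nonneg_left (hg3 t ht) (by positivity)
  have hexp : exp (2 * |ε|) ≤ exp (C * |ε|) := by
    rw [exp_le_exp]
    exact mul_le_mul_of_nonneg_right (by linarith) (abs_nonneg ε)
  rw [hcstar_pos t a ε q hq]
  calc _ ≤ 1 / (2 * η) * (a * (M * exp (2 * |ε|)) + 2 * q * B) := by
        rw [abs_mul, abs_of_pos (by positivity)]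
        exact mul_le_mul_of_nonneg_left ((abs_sub _ _).trans (add_le_add hcore hlin))
          (by positivity)
    _ = a * (M / (2 * η)) * exp (2 * |ε|) + q * (B / η) := by field_simp
    _ ≤ a * C * exp (C * |ε|) + q * C := by gcongr <;> linarith
    _ ≤ C * (1 + q) * (1 + a) * (1 + exp (C * |ε|)) := by
        have hC : 0 ≤ C := by positivity
        nlinarith [mul_nonneg (mul_nonneg hC ha) hq.le, mul_nonneg hC ha, mul_nonneg hC hq.le,
          mul_nonneg (mul_nonneg (mul_nonneg hC ha) hq.le) (by linarith : 0 ≤ exp (C * |ε|)),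
          mul_nonneg (mul_nonneg hC hq.le) (by linarith : 0 ≤ exp (C * |ε|))]

theorem cstar_growth_bound_general (k σ1 σ2 μ1 ρ η φ1 φ2 φ3 χ T Q0bar : ℝ)
    (hk : 0 < k) (hσ1 : 0 < σ1) (hσ2 : 0 < σ2) (hμ1 : 0 < μ1)
    (hρ : ρ ∈ Set.Icc (-1 : ℝ) 1) (hη : 0 < η) (hφ1 : 0 < φ1) (hφ2 : 0 ≤ φ2)
    (hφ3 : 0 ≤ φ3) (hχ : 0 < χ) (hT : 0 < T)
    (g3 : ℝ → ℝ) (mubar sigbarSq : ℝ → ℝ) (ghat : ℝ → ℝ → ℝ) (g2 : ℝ → ℝ → ℝ)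
    (cstar : ℝ → ℝ → ℝ → ℝ → ℝ)
    (hg3 : ∀ t, g3 t =
      Real.sqrt (φ1 * η) *
        (Real.exp (2 * t * Real.sqrt (φ1 / η)) * (Real.sqrt (φ1 * η) - χ)
          - Real.exp (2 * T * Real.sqrt (φ1 / η)) * (Real.sqrt (φ1 * η) + χ)) /
        (Real.exp (2 * t * Real.sqrt (φ1 / η)) * (Real.sqrt (φ1 * η) - χ)
          + Real.exp (2 * T * Real.sqrt (φ1 / η)) * (Real.sqrt (φ1 * η) + χ)))
    (hmubar : ∀ s, mubar s = Real.exp (-k * s))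
    (hsigbarSq : ∀ s, sigbarSq s = σ2 ^ 2 / (2 * k) * (1 - Real.exp (-2 * k * s)))
    (hghat : ∀ t r, ghat r t =
      Real.exp ((1 / η) * (∫ s in t..r, g3 s) + μ1 * (r - t)))
    (hg2 : ∀ t ε, g2 t ε =
      1 - φ3 * Real.exp (-ε) * (∫ r in t..T, ghat r t)
        - Real.exp (-ε) * ∫ r in t..T, ghat r t *
            Real.exp (mubar (r - t) * ε + sigbarSq (r - t) / 2
              + (ρ / k) * σ1 * σ2 * (1 - mubar (r - t))) *
            (k * mubar (r - t) * ε + k * sigbarSq (r - t) - σ2 ^ 2 / 2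
              - ρ * σ1 * σ2 * mubar (r - t) - μ1 + φ2))
    (hcstar_pos : ∀ t a ε q, 0 < q → cstar t a ε q =
      1 / (2 * η) * (a * Real.exp ε * (1 - g2 t ε) - 2 * q * g3 t))
    (hcstar_zero : ∀ t a ε, cstar t a ε 0 = 0) :
    ∃ C : ℝ, 0 < C ∧ ∀ t ∈ Set.Icc (0 : ℝ) T, ∀ a : ℝ, 0 < a →
      ∀ ε : ℝ, ∀ q ∈ Set.Icc (0 : ℝ) Q0bar,
        |cstar t a ε q| ≤ C * (1 + q) * (1 + a) * (1 + Real.exp (C * |ε|)) := by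
  set B := 2 * exp (2 * T * √(φ1 / η)) * (√(φ1 * η) + χ)
  have hB : 0 ≤ B := by positivity
  have hg3B : ∀ t ∈ Icc 0 T, |g3 t| ≤ B := fun t ht => by
    have ht0 : 0 ≤ t := ht.1
    rw [hg3]
    exact abs_mul_sub_div_add_le (sqrt_pos.mpr (by positivity)) hχ (one_le_exp (by positivity))
      (exp_le_exp.mpr (by gcongr; exact ht.2))
  have hghatG : ∀ t ∈ Icc 0 T, ∀ r ∈ Ioc t T, |ghat r t| ≤ exp ((B / η + μ1) * T) := by
    intro t ht r hr
    rw [hghat, abs_of_pos (exp_pos _)]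
    exact exp_integral_add_le hη hμ1.le hB hg3B ht.1 hr.1.le hr.2
  obtain ⟨C, hC, hcstar⟩ := exists_growth_bound_of_abs_le hη hB (by positivity) hg3B
    (fun t ht ε => abs_exp_mul_one_sub_g2_le hk (by positivity) hμ1.le (abs_le.mpr hρ) hφ2 hφ3
      (exp_pos _).le ht (hghatG t ht) hmubar hsigbarSq (hg2 t ε))
    hcstar_pos hcstar_zero
  exact ⟨C, hC, fun t ht a ha ε q hq => hcstar t ht a ha.le ε q hq.1⟩

/-- Growth bound on the candidate optimal liquidation rate `c*`:
`|c*(t, a, ε, q)| ≤ C (1 + q)(1 + a)(1 + e^{C|ε|})`. -/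
theorem cstar_growth_bound (k σ1 σ2 μ1 ρ η φ1 φ2 φ3 χ T Q0bar : ℝ)
    (hk : 0 < k) (hσ1 : 0 < σ1) (hσ2 : 0 < σ2) (hμ1 : 0 < μ1)
    (hρ : ρ ∈ Set.Icc (-1 : ℝ) 1) (hη : 0 < η) (hφ1 : 0 < φ1) (hφ2 : 0 ≤ φ2)
    (hφ3 : 0 ≤ φ3) (hχ : 0 < χ) (hT : 0 < T) (hQ0bar : 0 < Q0bar)
    (g3 : ℝ → ℝ) (mubar sigbarSq : ℝ → ℝ) (ghat : ℝ → ℝ → ℝ) (g2 : ℝ → ℝ → ℝ)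
    (cstar : ℝ → ℝ → ℝ → ℝ → ℝ)
    (hg3 : ∀ t, g3 t =
      Real.sqrt (φ1 * η) *
        (Real.exp (2 * t * Real.sqrt (φ1 / η)) * (Real.sqrt (φ1 * η) - χ)
          - Real.exp (2 * T * Real.sqrt (φ1 / η)) * (Real.sqrt (φ1 * η) + χ)) /
        (Real.exp (2 * t * Real.sqrt (φ1 / η)) * (Real.sqrt (φ1 * η) - χ)
          + Real.exp (2 * T * Real.sqrt (φ1 / η)) * (Real.sqrt (φ1 * η) + χ)))
    (hmubar : ∀ s, mubar s = Real.exp (-k * s))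
    (hsigbarSq : ∀ s, sigbarSq s = σ2 ^ 2 / (2 * k) * (1 - Real.exp (-2 * k * s)))
    (hghat : ∀ t r, ghat r t =
      Real.exp ((1 / η) * (∫ s in t..r, g3 s) + μ1 * (r - t)))
    (hg2 : ∀ t ε, g2 t ε =
      1 - φ3 * Real.exp (-ε) * (∫ r in t..T, ghat r t)
        - Real.exp (-ε) * ∫ r in t..T, ghat r t *
            Real.exp (mubar (r - t) * ε + sigbarSq (r - t) / 2
              + (ρ / k) * σ1 * σ2 * (1 - mubar (r - t))) *
            (k * mubar (r - t) * ε + k * sigbarSq (r - t) - σ2 ^ 2 / 2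
              - ρ * σ1 * σ2 * mubar (r - t) - μ1 + φ2))
    (hcstar_pos : ∀ t a ε q, 0 < q → cstar t a ε q =
      1 / (2 * η) * (a * Real.exp ε * (1 - g2 t ε) - 2 * q * g3 t))
    (hcstar_zero : ∀ t a ε, cstar t a ε 0 = 0) :
    ∃ C : ℝ, 0 < C ∧ ∀ t ∈ Set.Icc (0 : ℝ) T, ∀ a : ℝ, 0 < a →
      ∀ ε : ℝ, ∀ q ∈ Set.Icc (0 : ℝ) Q0bar,
        |cstar t a ε q| ≤ C * (1 + q) * (1 + a) * (1 + Real.exp (C * |ε|)) :=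
  cstar_growth_bound_general k σ1 σ2 μ1 ρ η φ1 φ2 φ3 χ T Q0bar hk hσ1 hσ2 hμ1 hρ hη hφ1 hφ2 hφ3 hχ
    hT g3 mubar sigbarSq ghat g2 cstar hg3 hmubar hsigbarSq hghat hg2 hcstar_pos hcstar_zero
end

section
/- Fix real parameters k > 0, σ1 > 0, σ2 > 0, μ1 > 0, ρ ∈ [−1, 1], let s > 0 and ε0 ∈ ℝ. Define μ̃(u) = −k·ε0·e^{−k u} + μ1 + (σ2²/2)·e^{−2 k u} + ρ·σ1·σ2·e^{−k u}, σ̃(u)² = σ1² + σ2²·e^{−2 k u} + 2·ρ·σ1·σ2·e^{−k u}, m(r) = ln s + (μ1 − σ1²/2)·r + ε0·(e^{−k r} − 1), and v(r) = σ1²·r + (σ2²/(2k))·(1 − e^{−2 k r}) + (2 ρ σ1 σ2 / k)·(1 − e^{−k r}). Then for every r ≥ 0: exp(m(r) + v(r)/2) = s · exp(∫_0^r μ̃(u) du) and exp(2·m(r) + 2·v(r)) = s² · exp(∫_0^r (2·μ̃(u) + σ̃(u)²) du). -/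
/-! Both integrands are linear combinations of `1`, `e^{-ku}` and `e^{-2ku}`, so their integrals
are explicit; each identity then reduces to an algebraic identity between the exponents. -/

open Real

lemma integral_exp_const_mul {c : ℝ} (hc : c ≠ 0) (a b : ℝ) :
    ∫ u in a..b, exp (c * u) = (exp (c * b) - exp (c * a)) / c := by
  rw [intervalIntegral.integral_comp_mul_left (fun u => exp u) hc, integral_exp, smul_eq_mul,
    inv_mul_eq_div]

lemma integral_const_add_exp_add_exp {k : ℝ} (hk : k ≠ 0) (α β γ r : ℝ) :
    ∫ u in (0 : ℝ)..r, (α + β * exp (-k * u) + γ * exp (-2 * k * u)) =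
      α * r + β * (1 - exp (-k * r)) / k + γ * (1 - exp (-2 * k * r)) / (2 * k) := by
  have hint : ∀ c : ℝ, IntervalIntegrable (fun u => exp (c * u)) MeasureTheory.volume 0 r :=
    fun c => (by fun_prop : Continuous fun u : ℝ => exp (c * u)).intervalIntegrable 0 r
  rw [intervalIntegral.integral_add (intervalIntegrable_const.add ((hint _).const_mul β))
      ((hint _).const_mul γ),
    intervalIntegral.integral_add intervalIntegrable_const ((hint _).const_mul β),
    intervalIntegral.integral_const, intervalIntegral.integral_const_mul,
    intervalIntegral.integral_const_mul, integral_exp_const_mul (neg_ne_zero.mpr hk),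
    integral_exp_const_mul (by simpa using hk), mul_zero, mul_zero, exp_zero]
  field_simp
  ring

theorem gbm_moment_matching_general (k σ1 σ2 μ1 ρ s ε0 : ℝ)
    (hk : 0 < k) (hs : 0 < s)
    (mutilde sigtildeSq m v : ℝ → ℝ)
    (hmutilde : ∀ u, mutilde u = -k * ε0 * Real.exp (-k * u) + μ1
      + σ2 ^ 2 / 2 * Real.exp (-2 * k * u) + ρ * σ1 * σ2 * Real.exp (-k * u))
    (hsigtildeSq : ∀ u, sigtildeSq u = σ1 ^ 2 + σ2 ^ 2 * Real.exp (-2 * k * u)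
      + 2 * ρ * σ1 * σ2 * Real.exp (-k * u))
    (hm : ∀ r, m r = Real.log s + (μ1 - σ1 ^ 2 / 2) * r + ε0 * (Real.exp (-k * r) - 1))
    (hv : ∀ r, v r = σ1 ^ 2 * r + σ2 ^ 2 / (2 * k) * (1 - Real.exp (-2 * k * r))
      + 2 * ρ * σ1 * σ2 / k * (1 - Real.exp (-k * r))) :
    ∀ r : ℝ, 0 ≤ r →
      Real.exp (m r + v r / 2) = s * Real.exp (∫ u in (0:ℝ)..r, mutilde u) ∧
      Real.exp (2 * m r + 2 * v r)
        = s ^ 2 * Real.exp (∫ u in (0:ℝ)..r, (2 * mutilde u + sigtildeSq u)) := by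
  intro r _
  have hk0 : k ≠ 0 := hk.ne'
  have hmean : ∫ u in (0 : ℝ)..r, mutilde u =
      ∫ u in (0 : ℝ)..r, (μ1 + (ρ * σ1 * σ2 - k * ε0) * exp (-k * u)
        + σ2 ^ 2 / 2 * exp (-2 * k * u)) := by
    congr 1 with u
    rw [hmutilde]
    ring
  have hsecond : ∫ u in (0 : ℝ)..r, (2 * mutilde u + sigtildeSq u) =
      ∫ u in (0 : ℝ)..r, ((2 * μ1 + σ1 ^ 2) + (4 * ρ * σ1 * σ2 - 2 * k * ε0) * exp (-k * u)
        + 2 * σ2 ^ 2 * exp (-2 * k * u)) := by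
    congr 1 with u
    rw [hmutilde, hsigtildeSq]
    ring
  rw [hmean, hsecond, integral_const_add_exp_add_exp hk0, integral_const_add_exp_add_exp hk0]
  constructor
  · rw [← exp_log hs, ← exp_add, hm, hv]
    congr 1
    field_simp
    ring
  · rw [← exp_log (pow_pos hs 2), ← exp_add, log_pow, hm, hv]
    congr 1
    field_simp
    ring

/-- Moment matching: the geometric Brownian motion with time-dependent drift `μ̃` and
volatility `σ̃`, started at `s = a e^{ε0}`, matches the first two moments of
`S_r = A_r e^{ε_r}` for every `r ≥ 0`. -/
theorem gbm_moment_matching (k σ1 σ2 μ1 ρ s ε0 : ℝ)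
    (hk : 0 < k) (hσ1 : 0 < σ1) (hσ2 : 0 < σ2) (hμ1 : 0 < μ1)
    (hρ : ρ ∈ Set.Icc (-1 : ℝ) 1) (hs : 0 < s)
    (mutilde sigtildeSq m v : ℝ → ℝ)
    (hmutilde : ∀ u, mutilde u = -k * ε0 * Real.exp (-k * u) + μ1
      + σ2 ^ 2 / 2 * Real.exp (-2 * k * u) + ρ * σ1 * σ2 * Real.exp (-k * u))
    (hsigtildeSq : ∀ u, sigtildeSq u = σ1 ^ 2 + σ2 ^ 2 * Real.exp (-2 * k * u)
      + 2 * ρ * σ1 * σ2 * Real.exp (-k * u))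
    (hm : ∀ r, m r = Real.log s + (μ1 - σ1 ^ 2 / 2) * r + ε0 * (Real.exp (-k * r) - 1))
    (hv : ∀ r, v r = σ1 ^ 2 * r + σ2 ^ 2 / (2 * k) * (1 - Real.exp (-2 * k * r))
      + 2 * ρ * σ1 * σ2 / k * (1 - Real.exp (-k * r))) :
    ∀ r : ℝ, 0 ≤ r →
      Real.exp (m r + v r / 2) = s * Real.exp (∫ u in (0:ℝ)..r, mutilde u) ∧
      Real.exp (2 * m r + 2 * v r)
        = s ^ 2 * Real.exp (∫ u in (0:ℝ)..r, (2 * mutilde u + sigtildeSq u)) :=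
  gbm_moment_matching_general k σ1 σ2 μ1 ρ s ε0 hk hs mutilde sigtildeSq m v hmutilde hsigtildeSq hm
    hv
end
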